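/- arXiv:1812.02450 — 2 statements merged into one kernel-verified Lean document; each statement's English description precedes it below -/
import Mathlib

section
/- Let X be a real Banach space, x, y ∈ S_X, and suppose that for all ε > 0, y ∈ cl conv{z ∈ B_{X**} : ‖x − z‖ ≥ 2 − ε} (closed convex hull taken in X**, with x, y viewed as elements of X** via the canonical embedding). Then for all ε > 0, y ∈ cl conv{z ∈ B_X : ‖x − z‖ ≥ 2 − ε}. -/
/-!
Separate `y` from the closed convex hull of `Δ_ε(x)` in `X` by a functional `f`. Every `z` in the
bidual set `Δ_{ε/2}(x)` is normed against `x` by some `g ∈ B_{X*}`, and a finite-dimensional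
Goldstine argument gives `w ∈ B_X` with `f w ≈ z f` and `g w ≈ z g`; then `w ∈ Δ_ε(x)`, so
`z f` is at least the separating level. This half-space of `X**` is closed and convex,
so it contains `y`, a contradiction.
-/

open NormedSpace

/-- The set `Δ_ε(x)` of the literature on Daugavet points. -/
def deltaSet {E : Type*} [SeminormedAddCommGroup E] (x : E) (ε : ℝ) : Set E :=
  {z | ‖z‖ ≤ 1 ∧ 2 - ε ≤ ‖x - z‖}

theorem ContinuousLinearMap.norm_le_of_forall_norm_le_one_apply_le {E : Type*}
    [SeminormedAddCommGroup E] [NormedSpace ℝ E] (φ : StrongDual ℝ E) {u : ℝ}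
    (h : ∀ w : E, ‖w‖ ≤ 1 → φ w ≤ u) : ‖φ‖ ≤ u := by
  have hu : 0 ≤ u := by simpa using h 0 (by simp)
  refine φ.opNorm_le_of_unit_norm hu fun w hw => abs_le.mpr ⟨?_, h w hw.le⟩
  have := h (-w) (by rw [norm_neg, hw])
  rw [map_neg] at this
  linarith

theorem ContinuousLinearMap.exists_norm_le_one_lt_apply_of_lt_norm {E : Type*}
    [NormedAddCommGroup E] [NormedSpace ℝ E] (φ : StrongDual ℝ E) {r : ℝ}
    (hr : r < ‖φ‖) : ∃ e : E, ‖e‖ ≤ 1 ∧ r < φ e := by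
  obtain ⟨e, he, hre⟩ := φ.exists_lt_apply_of_lt_opNorm hr
  rw [Real.norm_eq_abs] at hre
  rcases lt_abs.mp hre with hpos | hneg
  · exact ⟨e, he.le, hpos⟩
  · exact ⟨-e, by rw [norm_neg]; exact he.le, by rwa [map_neg]⟩

section Bidual

variable {X : Type*} [NormedAddCommGroup X] [NormedSpace ℝ X]

/-- Goldstine's theorem tested against finitely many functionals. -/
theorem exists_norm_le_one_forall_abs_apply_sub_le {ι : Type*} [Fintype ι]
    {z : StrongDual ℝ (StrongDual ℝ X)} (hz : ‖z‖ ≤ 1) (f : ι → StrongDual ℝ X) {η : ℝ}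
    (hη : 0 < η) : ∃ w : X, ‖w‖ ≤ 1 ∧ ∀ i, |f i w - z (f i)| ≤ η := by
  classical
  set Φ : X →L[ℝ] ι → ℝ := ContinuousLinearMap.pi f
  set K : Set (ι → ℝ) := closure (Φ '' Metric.closedBall 0 1)
  have hK : Convex ℝ K :=
    ((convex_closedBall (0 : X) 1).linear_image (Φ : X →ₗ[ℝ] ι → ℝ)).closure
  have hzK : (fun i => z (f i)) ∈ K := by
    by_contra hnot
    obtain ⟨φ, u, hφK, hφz⟩ := geometric_hahn_banach_closed_point hK isClosed_closure hnot
    set c : ι → ℝ := fun i => φ fun j => if i = j then 1 else 0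
    -- `φ ∘ Φ` is the functional `∑ c i • f i`, seen by every element of the bidual
    have hφ : ∀ a : StrongDual ℝ (StrongDual ℝ X),
        φ (fun i => a (f i)) = a (∑ i, c i • f i) := fun a => by
      rw [← ContinuousLinearMap.coe_coe φ, LinearMap.pi_apply_eq_sum_univ, map_sum]
      simp only [map_smul, smul_eq_mul, c, ContinuousLinearMap.coe_coe, mul_comm]
    have hnorm : ‖∑ i, c i • f i‖ ≤ u := by
      refine ContinuousLinearMap.norm_le_of_forall_norm_le_one_apply_le _ fun w hw => ?_
      have := hφK (Φ w) (subset_closure ⟨w, by simpa using hw, rfl⟩)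
      rw [← dual_def ℝ X w, ← hφ]
      exact this.le
    have : z (∑ i, c i • f i) ≤ u :=
      calc z (∑ i, c i • f i) ≤ ‖z‖ * ‖∑ i, c i • f i‖ := (le_abs_self _).trans (z.le_opNorm _)
        _ ≤ 1 * u := mul_le_mul hz hnorm (norm_nonneg _) zero_le_one
        _ = u := one_mul u
    rw [← hφ] at this
    linarith
  obtain ⟨_, ⟨w, hw, rfl⟩, hdist⟩ := Metric.mem_closure_iff.mp hzK η hη
  refine ⟨w, by simpa using hw, fun i => ?_⟩
  have := (dist_le_pi_dist _ _ i).trans hdist.le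
  rwa [Real.dist_eq, abs_sub_comm] at this

theorem exists_mem_deltaSet_apply_le_add (x : X) {δ ε : ℝ} (hδε : δ < ε)
    {z : StrongDual ℝ (StrongDual ℝ X)} (hz : z ∈ deltaSet (inclusionInDoubleDual ℝ X x) δ)
    (f : StrongDual ℝ X) {η : ℝ} (hη : 0 < η) : ∃ w ∈ deltaSet x ε, f w ≤ z f + η := by
  set s := (ε - δ) / 2 with hs_def
  have hs : 0 < s := by linarith
  obtain ⟨g, hg, hgz⟩ := (inclusionInDoubleDual ℝ X x - z).exists_norm_le_one_lt_apply_of_lt_norm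
    (show 2 - δ - s < _ by linarith [hz.2])
  rw [sub_apply, dual_def] at hgz
  obtain ⟨w, hw, hwz⟩ := exists_norm_le_one_forall_abs_apply_sub_le hz.1 ![f, g] (lt_min hη hs)
  have hf := (le_abs_self _).trans ((hwz 0).trans (min_le_left η s))
  have hg' := (le_abs_self _).trans ((hwz 1).trans (min_le_right η s))
  simp only [Matrix.cons_val_zero, Matrix.cons_val_one] at hf hg'
  have hgxw : g (x - w) ≤ ‖x - w‖ :=
    (le_abs_self _).trans ((g.le_opNorm _).trans (mul_le_of_le_one_left (norm_nonneg _) hg))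
  rw [map_sub] at hgxw
  exact ⟨w, ⟨hw, by linarith⟩, by linarith⟩

theorem mem_closure_convexHull_of_inclusionInDoubleDual_mem {S : Set X}
    {T : Set (StrongDual ℝ (StrongDual ℝ X))}
    (hST : ∀ z ∈ T, ∀ (f : StrongDual ℝ X), ∀ η > 0, ∃ w ∈ S, f w ≤ z f + η) {y : X}
    (hy : inclusionInDoubleDual ℝ X y ∈ closure (convexHull ℝ T)) :
    y ∈ closure (convexHull ℝ S) := by
  by_contra hnot
  obtain ⟨f, u, hfy, hfS⟩ :=
    geometric_hahn_banach_point_closed (convex_convexHull ℝ S).closure isClosed_closure hnot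
  set F : StrongDual ℝ (StrongDual ℝ X) →L[ℝ] ℝ := ContinuousLinearMap.apply ℝ ℝ f
  have hTH : T ⊆ {z | u ≤ F z} := fun z hz => le_of_forall_pos_lt_add fun η hη => by
    obtain ⟨w, hwS, hwz⟩ := hST z hz f η hη
    exact (hfS w (subset_closure (subset_convexHull ℝ S hwS))).trans_le hwz
  have hH : closure (convexHull ℝ T) ⊆ {z | u ≤ F z} :=
    closure_minimal (convexHull_min hTH (convex_halfSpace_ge F.isLinear u))
      (isClosed_le continuous_const F.continuous)
  have : u ≤ f y := by simpa [F, dual_def] using hH hy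
  linarith

end Bidual

theorem stmt_11_general {X : Type*} [NormedAddCommGroup X] [NormedSpace ℝ X]
    (x y : X)
    (h : ∀ ε > (0 : ℝ),
      inclusionInDoubleDual ℝ X y ∈
        closure (convexHull ℝ {z : StrongDual ℝ (StrongDual ℝ X) |
          ‖z‖ ≤ 1 ∧ 2 - ε ≤ ‖inclusionInDoubleDual ℝ X x - z‖})) :
    ∀ ε > (0 : ℝ),
      y ∈ closure (convexHull ℝ {z : X | ‖z‖ ≤ 1 ∧ 2 - ε ≤ ‖x - z‖}) := fun ε hε =>
  mem_closure_convexHull_of_inclusionInDoubleDual_mem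
    (fun _ hz f _ hη => exists_mem_deltaSet_apply_le_add x (half_lt_self hε) hz f hη)
    (h (ε / 2) (half_pos hε))

/-- If `x, y ∈ S_X` and, for all `ε > 0`, `y` (viewed in `X**`) lies in the
closed convex hull of `{z ∈ B_{X**} : ‖x - z‖ ≥ 2 - ε}`, then for all `ε > 0`,
`y` lies in the closed convex hull of `{z ∈ B_X : ‖x - z‖ ≥ 2 - ε}` computed
in `X`. -/
theorem stmt_11 {X : Type*} [NormedAddCommGroup X] [NormedSpace ℝ X]
    (x y : X) (hx : ‖x‖ = 1) (hy : ‖y‖ = 1)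
    (h : ∀ ε > (0 : ℝ),
      inclusionInDoubleDual ℝ X y ∈
        closure (convexHull ℝ {z : StrongDual ℝ (StrongDual ℝ X) |
          ‖z‖ ≤ 1 ∧ 2 - ε ≤ ‖inclusionInDoubleDual ℝ X x - z‖})) :
    ∀ ε > (0 : ℝ),
      y ∈ closure (convexHull ℝ {z : X | ‖z‖ ≤ 1 ∧ 2 - ε ≤ ‖x - z‖}) :=
  stmt_11_general x y h
end

section
/- Let K be an infinite compact Hausdorff space. Then C(K) has the convex diametral local diameter two property: the closed unit ball of C(K) equals the closed convex hull of the set of Δ-points of S_{C(K)}. In particular, every f ∈ S_{C(K)} can be approximated in sup norm by convex combinations of two functions f⁺, f⁻ ∈ B_{C(K)} each attaining the value ±1 at a limit point of K. -/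
/-!
Since `K` is infinite and compact it has a limit point `x₀`. A function `h` of the unit ball with
`h x₀ = 1` is a Δ-point: pick `n` points `y` near `x₀` where `h > 1 - ε`, and disjointly supported
bumps `χ_y` with `χ_y y = 1`. Each `h - χ_y (h + 1)` lies in the unit ball at distance at least
`2 - ε` from `h`, and their average is within `2 / n` of `h`. Applied to `-h`, the same holds when
`h x₀ = -1`. Every `f` of the unit ball is then within `ε` of `λ f⁺ + (1 - λ) f⁻` with
`f^± = (1 - η) f ± η`, `λ = (1 + f x₀) / 2`, and `η` a bump at `x₀` supported where `f` is
`ε`-close to `f x₀`.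
-/

open Set Topology

def IsDeltaPoint {E : Type*} [SeminormedAddCommGroup E] [NormedSpace ℝ E] (x : E) : Prop :=
  ‖x‖ = 1 ∧ ∀ ε > (0 : ℝ), x ∈ closure (convexHull ℝ {y : E | ‖y‖ ≤ 1 ∧ 2 - ε ≤ ‖x - y‖})

theorem IsDeltaPoint.neg {E : Type*} [SeminormedAddCommGroup E] [NormedSpace ℝ E] {x : E}
    (hx : IsDeltaPoint x) : IsDeltaPoint (-x) := by
  refine ⟨by rw [norm_neg, hx.1], fun ε hε => ?_⟩
  have hS : {y : E | ‖y‖ ≤ 1 ∧ 2 - ε ≤ ‖-x - y‖} = -{y : E | ‖y‖ ≤ 1 ∧ 2 - ε ≤ ‖x - y‖} := by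
    ext y
    simp only [mem_ofPred_eq, Set.mem_neg, norm_neg, sub_neg_eq_add, ← neg_add']
  rw [hS, convexHull_neg, ← neg_closure, Set.neg_mem_neg]
  exact hx.2 ε hε

namespace ContinuousMap

variable {K : Type*} [TopologicalSpace K] [CompactSpace K]

theorem norm_one_sub_mul_add_mul_le_one {η f g : C(K, ℝ)}
    (hη : ∀ x, η x ∈ Icc (0 : ℝ) 1) (hf : ‖f‖ ≤ 1) (hg : ∀ x, |g x| ≤ 1) :
    ‖(1 - η) * f + η * g‖ ≤ 1 := by
  rw [norm_le _ zero_le_one]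
  intro x
  have hfx := abs_le.mp ((f.norm_coe_le_norm x).trans hf)
  have hgx := abs_le.mp (hg x)
  have hηx := hη x
  simp only [add_apply, mul_apply, sub_apply, one_apply, Real.norm_eq_abs] at hfx hgx ⊢
  rw [abs_le]
  constructor <;> nlinarith [hηx.1, hηx.2]

variable [T2Space K]

theorem exists_bump {y : K} {U : Set K} (hU : IsOpen U) (hy : y ∈ U) :
    ∃ η : C(K, ℝ), η y = 1 ∧ (∀ x, η x ∈ Icc (0 : ℝ) 1) ∧ ∀ x ∉ U, η x = 0 := by
  obtain ⟨η, h0, h1, hη⟩ := exists_continuous_zero_one_of_isClosed hU.isClosed_compl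
    isClosed_singleton (disjoint_singleton_right.mpr (not_not.mpr hy))
  exact ⟨η, h1 rfl, hη, fun x hx => h0 hx⟩

theorem exists_bumps_sum_le_one (t : Finset K) :
    ∃ χ : K → C(K, ℝ), (∀ y, χ y y = 1) ∧ (∀ y x, χ y x ∈ Icc (0 : ℝ) 1) ∧
      ∀ x, ∑ y ∈ t, χ y x ≤ 1 := by
  obtain ⟨U, hU, hUdisj⟩ := t.finite_toSet.t2_separation
  choose χ hχ1 hχmem hχ0 using fun y => exists_bump (hU y).2 (hU y).1
  refine ⟨χ, hχ1, hχmem, fun x => ?_⟩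
  by_cases hx : ∃ y₀ ∈ t, x ∈ U y₀
  · obtain ⟨y₀, hy₀, hxy₀⟩ := hx
    have hvanish : ∀ y ∈ t, y ≠ y₀ → χ y x = 0 := fun y hy hne =>
      hχ0 y x fun hxy => disjoint_left.mp (hUdisj hy hy₀ hne) hxy hxy₀
    rw [Finset.sum_eq_single_of_mem y₀ hy₀ hvanish]
    exact (hχmem y₀ x).2
  · push Not at hx
    rw [Finset.sum_eq_zero fun y hy => hχ0 y x (hx y hy)]
    exact zero_le_one

theorem isDeltaPoint_of_apply_eq_one {h : C(K, ℝ)} {x₀ : K} [(𝓝[≠] x₀).NeBot]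
    (hh : ‖h‖ ≤ 1) (hx₀ : h x₀ = 1) : IsDeltaPoint h := by
  have habs : ∀ x, |h x| ≤ 1 := fun x => (h.norm_coe_le_norm x).trans hh
  refine ⟨le_antisymm hh (by simpa [hx₀] using h.norm_coe_le_norm x₀), fun ε hε => ?_⟩
  refine Metric.mem_closure_iff.2 fun δ hδ => ?_
  obtain ⟨n, hn⟩ := exists_nat_gt (2 / δ)
  have hn₀ : (0 : ℝ) < n := (by positivity : (0 : ℝ) < 2 / δ).trans hn
  have hV : {x | 1 - ε < h x} ∈ 𝓝 x₀ :=
    (isOpen_lt continuous_const h.continuous).mem_nhds (by simp [hx₀, hε])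
  obtain ⟨t, htV, htn⟩ := (infinite_of_mem_nhds x₀ hV).exists_subset_card_eq n
  obtain ⟨χ, hχ1, hχmem, hχsum⟩ := exists_bumps_sum_le_one t
  set g : K → C(K, ℝ) := fun y => h - χ y * (h + 1)
  have hg : ∀ y ∈ t, g y ∈ {g : C(K, ℝ) | ‖g‖ ≤ 1 ∧ 2 - ε ≤ ‖h - g‖} := by
    intro y hy
    refine ⟨?_, ?_⟩
    · have : g y = (1 - χ y) * h + χ y * (-1) := by ring
      rw [this]
      exact norm_one_sub_mul_add_mul_le_one (hχmem y) hh fun x => by simp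
    · have hhy : 1 - ε < h y := htV hy
      have : (h - g y) y = h y + 1 := by simp [g, hχ1]
      calc 2 - ε ≤ (h - g y) y := by linarith
        _ ≤ ‖h - g y‖ := (le_abs_self _).trans ((h - g y).norm_coe_le_norm y)
  refine ⟨t.centerMass (fun _ => (1 : ℝ)) g,
    t.centerMass_mem_convexHull (fun _ _ => zero_le_one) (by simp [htn, hn₀]) hg, ?_⟩
  have hdiff :
      h - t.centerMass (fun _ => (1 : ℝ)) g = (n : ℝ)⁻¹ • ((∑ y ∈ t, χ y) * (h + 1)) := by
    simp only [Finset.centerMass, g, Finset.sum_const, htn, Nat.smul_one_eq_cast, one_smul,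
      Finset.sum_sub_distrib, ← Finset.sum_mul, smul_sub]
    rw [← Nat.cast_smul_eq_nsmul ℝ, smul_smul, inv_mul_cancel₀ hn₀.ne', one_smul, sub_sub_cancel]
  have hsum : ‖∑ y ∈ t, χ y‖ ≤ 1 :=
    (norm_le _ zero_le_one).2 fun x => by
      rw [sum_apply, Real.norm_eq_abs, abs_of_nonneg (Finset.sum_nonneg fun y _ => (hχmem y x).1)]
      exact hχsum x
  have hh1 : ‖h + 1‖ ≤ 2 :=
    (norm_le _ zero_le_two).2 fun x => by
      have := abs_le.mp (habs x)
      simp only [add_apply, one_apply, Real.norm_eq_abs]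
      rw [abs_le]
      constructor <;> linarith
  rw [dist_eq_norm, hdiff, norm_smul, Real.norm_of_nonneg (inv_nonneg.2 hn₀.le)]
  calc (n : ℝ)⁻¹ * ‖(∑ y ∈ t, χ y) * (h + 1)‖ ≤ (n : ℝ)⁻¹ * (1 * 2) := by
        gcongr
        exact (norm_mul_le _ _).trans (mul_le_mul hsum hh1 (norm_nonneg _) zero_le_one)
    _ < δ := by
        rw [div_lt_iff₀ hδ] at hn
        rw [one_mul, inv_mul_lt_iff₀ hn₀]
        linarith

theorem isDeltaPoint_of_apply_eq_neg_one {h : C(K, ℝ)} {x₀ : K} [(𝓝[≠] x₀).NeBot]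
    (hh : ‖h‖ ≤ 1) (hx₀ : h x₀ = -1) : IsDeltaPoint h := by
  simpa using (isDeltaPoint_of_apply_eq_one (x₀ := x₀) (h := -h) (by rwa [norm_neg])
    (by simp [hx₀])).neg

theorem exists_norm_sub_smul_add_smul_le {f : C(K, ℝ)} (hf : ‖f‖ ≤ 1) (x₀ : K) {ε : ℝ}
    (hε : 0 < ε) :
    ∃ fp fm : C(K, ℝ), ‖fp‖ ≤ 1 ∧ ‖fm‖ ≤ 1 ∧ fp x₀ = 1 ∧ fm x₀ = -1 ∧
      ∃ lam ∈ Icc (0 : ℝ) 1, ‖f - (lam • fp + (1 - lam) • fm)‖ ≤ ε := by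
  have hfx₀ := abs_le.mp ((f.norm_coe_le_norm x₀).trans hf)
  have hV : IsOpen {x | |f x - f x₀| < ε} :=
    isOpen_lt (f.continuous.sub continuous_const).abs continuous_const
  obtain ⟨η, hη1, hηmem, hη0⟩ := exists_bump (y := x₀) hV (by simpa using hε)
  refine ⟨(1 - η) * f + η * 1, (1 - η) * f + η * (-1),
    norm_one_sub_mul_add_mul_le_one hηmem hf fun x => by simp,
    norm_one_sub_mul_add_mul_le_one hηmem hf fun x => by simp,
    by simp [hη1], by simp [hη1], (1 + f x₀) / 2,
    ⟨by linarith [hfx₀.1], by linarith [hfx₀.2]⟩, (norm_le _ hε.le).2 fun x => ?_⟩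
  -- the combination is `(1 - η) f + η f(x₀)`, which differs from `f` only where `η ≠ 0`
  have hx : (f - (((1 + f x₀) / 2) • ((1 - η) * f + η * 1) +
      (1 - (1 + f x₀) / 2) • ((1 - η) * f + η * (-1)))) x = η x * (f x - f x₀) := by
    simp only [sub_apply, add_apply, smul_apply, mul_apply, one_apply, neg_apply, smul_eq_mul]
    ring
  rw [hx, Real.norm_eq_abs, abs_mul]
  by_cases hxV : |f x - f x₀| < ε
  · calc |η x| * |f x - f x₀| ≤ 1 * ε := by
          gcongr
          exact abs_le.2 ⟨by linarith [(hηmem x).1], (hηmem x).2⟩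
      _ = ε := one_mul ε
  · simp [hη0 x hxV, hε.le]

end ContinuousMap

open ContinuousMap in
/-- For `K` an infinite compact Hausdorff space, `C(K)` has the convex
diametral local diameter two property: the closed unit ball is the closed
convex hull of the Δ-points. In particular, every norm-one `f` is, up to `ε`,
a convex combination of two functions `f⁺, f⁻` of the unit ball attaining the
values `1` resp. `-1` at a limit point of `K`. -/
theorem stmt_17 {K : Type*} [TopologicalSpace K] [CompactSpace K] [T2Space K] [Infinite K] :
    Metric.closedBall (0 : C(K, ℝ)) 1 =
      closure (convexHull ℝ
        {f : C(K, ℝ) | ‖f‖ = 1 ∧ ∀ ε > (0 : ℝ),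
          f ∈ closure (convexHull ℝ {g : C(K, ℝ) | ‖g‖ ≤ 1 ∧ 2 - ε ≤ ‖f - g‖})}) ∧
    ∀ f : C(K, ℝ), ‖f‖ = 1 → ∀ ε > (0 : ℝ),
      ∃ fp fm : C(K, ℝ), ‖fp‖ ≤ 1 ∧ ‖fm‖ ≤ 1 ∧
        (∃ x₀ : K, (nhdsWithin x₀ {x₀}ᶜ).NeBot ∧ fp x₀ = 1) ∧
        (∃ x₁ : K, (nhdsWithin x₁ {x₁}ᶜ).NeBot ∧ fm x₁ = -1) ∧
        ∃ lam : ℝ, lam ∈ Set.Icc (0 : ℝ) 1 ∧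
          ‖f - (lam • fp + (1 - lam) • fm)‖ ≤ ε := by
  obtain ⟨x₀, hx₀⟩ := exists_nhds_ne_neBot K
  refine ⟨subset_antisymm (fun f hf => Metric.mem_closure_iff.2 fun δ hδ => ?_) ?_,
    fun f hf ε hε => ?_⟩
  · obtain ⟨fp, fm, hfp, hfm, hfp1, hfm1, lam, hlam, happrox⟩ :=
      exists_norm_sub_smul_add_smul_le (mem_closedBall_zero_iff.1 hf) x₀ (half_pos hδ)
    have hΔp : IsDeltaPoint fp := isDeltaPoint_of_apply_eq_one hfp hfp1
    have hΔm : IsDeltaPoint fm := isDeltaPoint_of_apply_eq_neg_one hfm hfm1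
    refine ⟨lam • fp + (1 - lam) • fm, convex_convexHull ℝ {f : C(K, ℝ) | IsDeltaPoint f}
      (subset_convexHull ℝ _ hΔp) (subset_convexHull ℝ _ hΔm) hlam.1 (sub_nonneg.2 hlam.2)
      (add_sub_cancel _ _), ?_⟩
    rw [dist_eq_norm]
    linarith
  · exact closure_minimal (convexHull_min (fun f hf => mem_closedBall_zero_iff.2 hf.1.le)
      (convex_closedBall _ _)) Metric.isClosed_closedBall
  · obtain ⟨fp, fm, hfp, hfm, hfp1, hfm1, happrox⟩ :=
      exists_norm_sub_smul_add_smul_le hf.le x₀ hε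
    exact ⟨fp, fm, hfp, hfm, ⟨x₀, hx₀, hfp1⟩, ⟨x₀, hx₀, hfm1⟩, happrox⟩
end
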